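/- Let (X, f_{1,∞}) be a non-autonomous system on a compact metric space, and (M(X), f̃_{1,∞}) the induced system on the space of Borel probability measures with the Prohorov metric, where f̃_1^n(ν)(B) = ν(f_1^{-n}(B)). If (M(X), f̃_{1,∞}) is strongly multi-sensitive, then (X, f_{1,∞}) is strongly multi-sensitive. -/

import Mathlib

open Metric Set MeasureTheory
open scoped ENNReal NNReal

/-- `nacomp f n = f_n ∘ ⋯ ∘ f_1` (and `nacomp f 0 = id`): the time-`n` map of the
non-autonomous system `f_{1,∞}`. -/
def nacomp {X : Type*} (f : ℕ → X → X) : ℕ → X → X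
  | 0 => id
  | n + 1 => f (n + 1) ∘ nacomp f n

/-- `compFrom f i k = f_{i+k-1} ∘ ⋯ ∘ f_i`, i.e. `f_i^k`. -/
def compFrom {X : Type*} (f : ℕ → X → X) (i : ℕ) : ℕ → X → X
  | 0 => id
  | k + 1 => f (i + k) ∘ compFrom f i k

/-- Multi-sensitivity of `f_{1,∞}` with respect to the vector `(v 0, …, v (r-1))`. -/
def multiSensWrt {X : Type*} [MetricSpace X] (f : ℕ → X → X) (r : ℕ) (v : ℕ → ℕ) : Prop :=
  ∃ δ > 0, ∀ U : ℕ → Set X, (∀ i < r, IsOpen (U i) ∧ (U i).Nonempty) →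
    ∃ n ≥ 1, ∀ i < r, ∃ x ∈ U i, ∃ y ∈ U i,
      δ < dist (nacomp f (n * v i) x) (nacomp f (n * v i) y)

/-- Strong multi-sensitivity: multi-sensitivity w.r.t. every vector in `ℕ^r`, every `r`. -/
def strongMultiSens {X : Type*} [MetricSpace X] (f : ℕ → X → X) : Prop :=
  ∀ r ≥ 1, ∀ v : ℕ → ℕ, (∀ i < r, 1 ≤ v i) → multiSensWrt f r v

/-- `𝒩`-sensitivity: multi-sensitivity w.r.t. `(1, 2, …, r)` for every `r`. -/
def nSens {X : Type*} [MetricSpace X] (f : ℕ → X → X) : Prop :=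
  ∀ r ≥ 1, multiSensWrt f r (fun i => i + 1)

/-- Sensitivity of the non-autonomous system. -/
def sens {X : Type*} [MetricSpace X] (f : ℕ → X → X) : Prop :=
  ∃ δ > 0, ∀ U : Set X, IsOpen U → U.Nonempty →
    ∃ n ≥ 1, ∃ x ∈ U, ∃ y ∈ U, δ < dist (nacomp f n x) (nacomp f n y)

/-- Multi-sensitivity of the non-autonomous system. -/
def multiSens {X : Type*} [MetricSpace X] (f : ℕ → X → X) : Prop :=
  ∃ δ > 0, ∀ r : ℕ, ∀ U : ℕ → Set X, (∀ i < r, IsOpen (U i) ∧ (U i).Nonempty) →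
    ∃ n ≥ 1, ∀ i < r, ∃ x ∈ U i, ∃ y ∈ U i, δ < dist (nacomp f n x) (nacomp f n y)

/-- Cofinite sensitivity: for some `δ > 0`, for every nonempty open `U` the set
`N_{f_{1,∞}}(U, δ)` is cofinite in `{1, 2, …}`. -/
def cofSens {X : Type*} [MetricSpace X] (f : ℕ → X → X) : Prop :=
  ∃ δ > 0, ∀ U : Set X, IsOpen U → U.Nonempty →
    {n : ℕ | 1 ≤ n ∧ ¬ ∃ x ∈ U, ∃ y ∈ U, δ < dist (nacomp f n x) (nacomp f n y)}.Finite

/-- Autonomous analogue of `multiSensWrt` for a single map `g`. -/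
def multiSensWrtAuto {X : Type*} [MetricSpace X] (g : X → X) (r : ℕ) (v : ℕ → ℕ) : Prop :=
  ∃ δ > 0, ∀ U : ℕ → Set X, (∀ i < r, IsOpen (U i) ∧ (U i).Nonempty) →
    ∃ n ≥ 1, ∀ i < r, ∃ x ∈ U i, ∃ y ∈ U i,
      δ < dist (g^[n * v i] x) (g^[n * v i] y)

def strongMultiSensAuto {X : Type*} [MetricSpace X] (g : X → X) : Prop :=
  ∀ r ≥ 1, ∀ v : ℕ → ℕ, (∀ i < r, 1 ≤ v i) → multiSensWrtAuto g r v

def nSensAuto {X : Type*} [MetricSpace X] (g : X → X) : Prop :=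
  ∀ r ≥ 1, multiSensWrtAuto g r (fun i => i + 1)

/-- `k`-periodicity of the non-autonomous system: `f_{j+kl} = f_j` for `l ≥ 1`, `1 ≤ j ≤ k`. -/
def kPeriodic {X : Type*} (f : ℕ → X → X) (k : ℕ) : Prop :=
  1 ≤ k ∧ ∀ l ≥ 1, ∀ j, 1 ≤ j → j ≤ k → f (j + k * l) = f j

/-- Multi-transitivity of the non-autonomous system. -/
def multiTrans {X : Type*} [TopologicalSpace X] (f : ℕ → X → X) : Prop :=
  ∀ m ≥ 1, ∀ U V : ℕ → Set X,
    (∀ i < m, IsOpen (U i) ∧ (U i).Nonempty ∧ IsOpen (V i) ∧ (V i).Nonempty) →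
    ∃ k ≥ 1, ∀ i < m, (nacomp f ((i + 1) * k) '' U i ∩ V i).Nonempty

/-- Multi-sensitivity w.r.t. a vector, for an explicit distance function `ρ`
(used for products equipped with the metric `√(d₁² + d₂²)`). -/
def multiSensWrtD {Z : Type*} [TopologicalSpace Z] (ρ : Z → Z → ℝ) (f : ℕ → Z → Z)
    (r : ℕ) (v : ℕ → ℕ) : Prop :=
  ∃ δ > 0, ∀ U : ℕ → Set Z, (∀ i < r, IsOpen (U i) ∧ (U i).Nonempty) →
    ∃ n ≥ 1, ∀ i < r, ∃ x ∈ U i, ∃ y ∈ U i,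
      δ < ρ (nacomp f (n * v i) x) (nacomp f (n * v i) y)

def strongMultiSensD {Z : Type*} [TopologicalSpace Z] (ρ : Z → Z → ℝ) (f : ℕ → Z → Z) : Prop :=
  ∀ r ≥ 1, ∀ v : ℕ → ℕ, (∀ i < r, 1 ≤ v i) → multiSensWrtD ρ f r v

def nSensD {Z : Type*} [TopologicalSpace Z] (ρ : Z → Z → ℝ) (f : ℕ → Z → Z) : Prop :=
  ∀ r ≥ 1, multiSensWrtD ρ f r (fun i => i + 1)

/-- The metric `√(d₁² + d₂²)` on a product of metric spaces. -/
noncomputable def prodDist {X Y : Type*} [MetricSpace X] [MetricSpace Y]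
    (p q : X × Y) : ℝ :=
  Real.sqrt (dist p.1 q.1 ^ 2 + dist p.2 q.2 ^ 2)

/-- `N_{f_{1,∞}^{[v]}}(U, δ)` for an explicit distance function `ρ`. -/
def NsetD {Z : Type*} (ρ : Z → Z → ℝ) (f : ℕ → Z → Z) (v : ℕ) (U : Set Z) (δ : ℝ) : Set ℕ :=
  {n : ℕ | 1 ≤ n ∧ ∃ x ∈ U, ∃ y ∈ U, δ < ρ (nacomp f (n * v) x) (nacomp f (n * v) y)}

/-- `N_{f_{1,∞}^{[v]} × g_{1,∞}^{[v']}}(U × U', δ)` for the product metric `√(d₁² + d₂²)`. -/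
noncomputable def NsetProd {X Y : Type*} [MetricSpace X] [MetricSpace Y]
    (f : ℕ → X → X) (g : ℕ → Y → Y) (v v' : ℕ) (U : Set X) (U' : Set Y) (δ : ℝ) : Set ℕ :=
  {n : ℕ | 1 ≤ n ∧ ∃ p ∈ U ×ˢ U', ∃ q ∈ U ×ˢ U',
    δ < prodDist (nacomp f (n * v) p.1, nacomp g (n * v') p.2)
                 (nacomp f (n * v) q.1, nacomp g (n * v') q.2)}

lemma nacomp_continuous {X : Type*} [TopologicalSpace X] (f : ℕ → X → X)
    (hf : ∀ n, Continuous (f n)) (m : ℕ) : Continuous (nacomp f m) := by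
  induction m with
  | zero => exact continuous_id
  | succ k ih => exact (hf (k + 1)).comp ih

/-- if the induced system on probability measures (Prohorov metric)
is strongly multi-sensitive, so is the base system. -/
theorem stmt_10 {X : Type*} [MetricSpace X] [CompactSpace X]
    [MeasurableSpace X] [BorelSpace X]
    (f : ℕ → X → X) (hf : ∀ n, Continuous (f n))
    (F : ℕ → LevyProkhorov (ProbabilityMeasure X) → LevyProkhorov (ProbabilityMeasure X))
    (hFcont : ∀ n, Continuous (F n))
    (hF : ∀ n (ν : LevyProkhorov (ProbabilityMeasure X)) (B : Set X), MeasurableSet B →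
      (LevyProkhorov.toMeasureEquiv (F n ν)) B
        = (LevyProkhorov.toMeasureEquiv ν) (f n ⁻¹' B))
    (h : strongMultiSens F) : strongMultiSens f := by
  intro r hr v hv
  obtain ⟨δ, hδ, hsens⟩ := h r hr v hv
  refine ⟨δ / 2, by linarith, ?_⟩
  intro U hU
  -- pushforward formula for iterates
  have push : ∀ (k : ℕ) (w : LevyProkhorov (ProbabilityMeasure X)) (B : Set X),
      MeasurableSet B →
      (LevyProkhorov.toMeasureEquiv (nacomp F k w)).toMeasure B
        = (LevyProkhorov.toMeasureEquiv w).toMeasure (nacomp f k ⁻¹' B) := by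
    intro k
    induction k with
    | zero => intro w B _; rfl
    | succ k ih =>
      intro w B hB
      have h1 : (LevyProkhorov.toMeasureEquiv (nacomp F (k + 1) w)).toMeasure B
          = (LevyProkhorov.toMeasureEquiv (nacomp F k w)).toMeasure
              (f (k + 1) ⁻¹' B) := by
        rw [← ProbabilityMeasure.ennreal_coeFn_eq_coeFn_toMeasure,
          ← ProbabilityMeasure.ennreal_coeFn_eq_coeFn_toMeasure]
        have h0 := hF (k + 1) (nacomp F k w) B hB
        exact congrArg (fun z : ℝ≥0 => (z : ℝ≥0∞)) h0
      rw [h1, ih w (f (k + 1) ⁻¹' B) ((hf (k + 1)).measurable hB)]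
      rfl
  -- choose centers and radii
  have hxall : ∀ i, ∃ x : X, ∃ ξ : ℝ, 0 < ξ ∧ ξ ≤ δ / 2 ∧ (i < r → Metric.ball x ξ ⊆ U i) := by
    intro i
    by_cases hi : i < r
    · obtain ⟨hopen, x, hx⟩ := hU i hi
      obtain ⟨ξ0, hξ0, hb⟩ := Metric.isOpen_iff.mp hopen x hx
      exact ⟨x, min ξ0 (δ / 2), lt_min hξ0 (by linarith), min_le_right _ _,
        fun _ => (Metric.ball_subset_ball (min_le_left _ _)).trans hb⟩
    · obtain ⟨hopen, x, hx⟩ := hU 0 (by omega)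
      exact ⟨x, δ / 2, by linarith, le_rfl, fun hc => absurd hc hi⟩
  choose x ξ hξpos hξle hball using hxall
  set dLP : ℕ → LevyProkhorov (ProbabilityMeasure X) := fun i =>
    (LevyProkhorov.toMeasureEquiv).symm
      ⟨MeasureTheory.Measure.dirac (x i), inferInstance⟩ with hdLP
  obtain ⟨n, hn, hS⟩ := hsens (fun i => Metric.ball (dLP i) (ξ i))
    (fun i _ => ⟨Metric.isOpen_ball, ⟨dLP i, Metric.mem_ball_self (hξpos i)⟩⟩)
  refine ⟨n, hn, ?_⟩
  intro i hi
  by_contra hcon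
  push_neg at hcon
  obtain ⟨ν, hν, μ, hμ, hd⟩ := hS i hi
  set m := n * v i with hm
  have hUm : MeasurableSet (U i) := (hU i hi).1.measurableSet
  -- any measure in the chosen ball is concentrated on `U i`
  have conc : ∀ w ∈ Metric.ball (dLP i) (ξ i),
      (LevyProkhorov.toMeasureEquiv w).toMeasure (U i)ᶜ
        ≤ ENNReal.ofReal (δ / 2) := by
    intro w hw
    set W := (LevyProkhorov.toMeasureEquiv w).toMeasure with hW
    have hdist : levyProkhorovEDist W (MeasureTheory.Measure.dirac (x i))
        < ENNReal.ofReal (ξ i) := by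
      have h1 : dist w (dLP i) < ξ i := Metric.mem_ball.mp hw
      rw [LevyProkhorov.dist_probabilityMeasure_def] at h1
      have h2 : levyProkhorovEDist W (MeasureTheory.Measure.dirac (x i))
          = ENNReal.ofReal (levyProkhorovDist W (MeasureTheory.Measure.dirac (x i))) :=
        (ENNReal.ofReal_toReal (levyProkhorovEDist_ne_top _ _)).symm
      rw [h2]
      exact ENNReal.ofReal_lt_ofReal_iff (hξpos i) |>.mpr h1
    have key := right_measure_le_of_levyProkhorovEDist_lt hdist
      (B_mble := measurableSet_singleton (x i))
    rw [MeasureTheory.Measure.dirac_apply_of_mem (Set.mem_singleton _),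
      ENNReal.toReal_ofReal (hξpos i).le, Metric.thickening_singleton] at key
    have hU1 : (1 : ℝ≥0∞) ≤ W (U i) + ENNReal.ofReal (ξ i) :=
      key.trans (add_le_add_left (measure_mono (hball i hi)) _)
    have hsplit : W (U i) + W (U i)ᶜ = 1 := by
      rw [measure_add_measure_compl hUm, measure_univ]
    have h3 : W (U i) + W (U i)ᶜ ≤ W (U i) + ENNReal.ofReal (ξ i) := by
      rw [hsplit]; exact hU1
    exact ((ENNReal.add_le_add_iff_left (measure_ne_top W _)).mp h3).trans
      (ENNReal.ofReal_le_ofReal (hξle i))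
  -- the contradiction: the two pushed measures are close
  have hdle : dist (nacomp F m ν) (nacomp F m μ) ≤ δ := by
    rw [LevyProkhorov.dist_probabilityMeasure_def]
    apply levyProkhorovDist_le_of_forall_le _ _ hδ.le
    intro ε B hε hB
    have hgm : Continuous (nacomp f m) := nacomp_continuous f hf m
    by_cases hint : (nacomp f m ⁻¹' B ∩ U i).Nonempty
    · obtain ⟨z, hzB, hzU⟩ := hint
      have hsub : U i ⊆ nacomp f m ⁻¹' (Metric.thickening ε B) := by
        intro y hy
        rw [Set.mem_preimage, Metric.mem_thickening_iff]
        exact ⟨nacomp f m z, hzB, lt_of_le_of_lt (hcon y hy z hzU) (by linarith)⟩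
      have hQ : (1 : ℝ≥0∞) ≤ (LevyProkhorov.toMeasureEquiv
          (nacomp F m μ)).toMeasure (Metric.thickening ε B) + ENNReal.ofReal ε := by
        set Q := (LevyProkhorov.toMeasureEquiv μ).toMeasure with hQdef
        have huniv : (Set.univ : Set X) ⊆
            nacomp f m ⁻¹' (Metric.thickening ε B) ∪ (U i)ᶜ := by
          intro y _
          by_cases hy : y ∈ U i
          · exact Or.inl (hsub hy)
          · exact Or.inr hy
        have h4 : (1 : ℝ≥0∞) = Q Set.univ := (measure_univ).symm
        have h5 : Q Set.univ ≤ Q (nacomp f m ⁻¹' (Metric.thickening ε B)) + Q (U i)ᶜ :=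
          (measure_mono huniv).trans (measure_union_le _ _)
        have h6 : Q (U i)ᶜ ≤ ENNReal.ofReal ε :=
          (conc μ hμ).trans (ENNReal.ofReal_le_ofReal (by linarith))
        rw [push m μ (Metric.thickening ε B) isOpen_thickening.measurableSet]
        calc (1 : ℝ≥0∞) = Q Set.univ := h4
          _ ≤ Q (nacomp f m ⁻¹' (Metric.thickening ε B)) + Q (U i)ᶜ := h5
          _ ≤ Q (nacomp f m ⁻¹' (Metric.thickening ε B)) + ENNReal.ofReal ε :=
              add_le_add_right h6 _
      exact le_trans MeasureTheory.prob_le_one hQ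
    · have hsub : nacomp f m ⁻¹' B ⊆ (U i)ᶜ := fun y hy hyU => hint ⟨y, hy, hyU⟩
      calc (LevyProkhorov.toMeasureEquiv (nacomp F m ν)).toMeasure B
          = (LevyProkhorov.toMeasureEquiv ν).toMeasure (nacomp f m ⁻¹' B) :=
            push m ν B hB
        _ ≤ (LevyProkhorov.toMeasureEquiv ν).toMeasure (U i)ᶜ :=
            measure_mono hsub
        _ ≤ ENNReal.ofReal (δ / 2) := conc ν hν
        _ ≤ ENNReal.ofReal ε := ENNReal.ofReal_le_ofReal (by linarith)
        _ ≤ _ := le_add_self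
  exact absurd hd (not_lt.mpr hdle)
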